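/- (Discrete form of Theorem 1.) Let K ≥ 2, let X be a nonempty finite set of instances, let μ : X → ℝ satisfy μ(x) > 0 and Σ_{x∈X} μ(x) = 1, and for each x let q(x) ∈ Δ be the true posterior with q_k(x) < 1 for all k, with complementary distribution q̄_k(x) = (1 − q_k(x))/(K − 1). For a predictor p : X → Δ with p_k(x) < 1 for all k, x, define the total complementary risk R̄(p) = Σ_{x∈X} μ(x) · (−Σ_{k=1}^K q̄_k(x) log(1 − p_k(x))). Then R̄(p) ≥ R̄(q) for every such predictor p, with equality if and only if p(x) = q(x) for all x ∈ X; consequently the minimizer of the complementary-label risk induces, at every instance x, the same argmax decision as the classifier trained with the true labels (the Bayes classifier x ↦ argmax_k q_k(x)). -/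

import Mathlib

/-!
With `a = 1 - q(x)` and `b = 1 - p(x)`, both positive with the same total `K - 1`, the
per-instance risk is `-(∑ₖ aₖ log bₖ) / (K - 1)`. Termwise `a log b ≤ a log a + (b - a)`
(this is `log t ≤ t - 1` at `t = b / a`), strictly unless `b = a`, and the slack terms
`b - a` sum to zero: this is Gibbs' inequality, so `p(x) = q(x)` is the unique minimizer
at every instance. Positive weights `μ(x)` carry this over to the total risk, and a global
minimizer must therefore be `q` itself.
-/

open Real Finset

lemma mul_log_le_mul_log_add_sub {a b : ℝ} (ha : 0 < a) (hb : 0 < b) :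
    a * log b ≤ a * log a + (b - a) := by
  have h := mul_le_mul_of_nonneg_left (log_le_sub_one_of_pos (div_pos hb ha)) ha.le
  rw [log_div hb.ne' ha.ne', mul_sub, mul_sub, mul_div_cancel₀ b ha.ne'] at h
  linarith

lemma mul_log_lt_mul_log_add_sub {a b : ℝ} (ha : 0 < a) (hb : 0 < b) (hba : b ≠ a) :
    a * log b < a * log a + (b - a) := by
  have hne : b / a ≠ 1 := fun h => hba ((div_eq_one_iff_eq ha.ne').mp h)
  have h := mul_lt_mul_of_pos_left (log_lt_sub_one_of_pos (div_pos hb ha) hne) ha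
  rw [log_div hb.ne' ha.ne', mul_sub, mul_sub, mul_div_cancel₀ b ha.ne'] at h
  linarith

section Gibbs

variable {ι : Type*} [Fintype ι] {a b : ι → ℝ}

lemma sum_mul_log_add_sub_eq (hsum : ∑ i, b i = ∑ i, a i) :
    ∑ i, (a i * log (a i) + (b i - a i)) = ∑ i, a i * log (a i) := by
  rw [sum_add_distrib, sum_sub_distrib, hsum, sub_self, add_zero]

theorem sum_mul_log_le_sum_mul_log (ha : ∀ i, 0 < a i) (hb : ∀ i, 0 < b i)
    (hsum : ∑ i, b i = ∑ i, a i) :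
    ∑ i, a i * log (b i) ≤ ∑ i, a i * log (a i) :=
  sum_mul_log_add_sub_eq hsum ▸
    sum_le_sum fun i _ => mul_log_le_mul_log_add_sub (ha i) (hb i)

theorem sum_mul_log_lt_sum_mul_log (ha : ∀ i, 0 < a i) (hb : ∀ i, 0 < b i)
    (hsum : ∑ i, b i = ∑ i, a i) (hba : b ≠ a) :
    ∑ i, a i * log (b i) < ∑ i, a i * log (a i) := by
  obtain ⟨j, hj⟩ := Function.ne_iff.mp hba
  rw [← sum_mul_log_add_sub_eq hsum]
  exact sum_lt_sum (fun i _ => mul_log_le_mul_log_add_sub (ha i) (hb i))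
    ⟨j, mem_univ j, mul_log_lt_mul_log_add_sub (ha j) (hb j) hj⟩

end Gibbs

/-- The risk `L_{q̄}(p)` of the prediction `p` under the complementary distribution of `q`. -/
noncomputable def complementaryRisk {K : ℕ} (q p : Fin K → ℝ) : ℝ :=
  -∑ k, ((1 - q k) / ((K : ℝ) - 1)) * log (1 - p k)

noncomputable def totalComplementaryRisk {K : ℕ} {X : Type*} [Fintype X] (μ : X → ℝ)
    (q p : X → Fin K → ℝ) : ℝ :=
  ∑ x, μ x * complementaryRisk (q x) (p x)

section ComplementaryRisk

variable {K : ℕ} {q p : Fin K → ℝ}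

lemma complementaryRisk_eq_neg_sum_div (q p : Fin K → ℝ) :
    complementaryRisk q p = -(∑ k, (1 - q k) * log (1 - p k)) / ((K : ℝ) - 1) := by
  simp only [complementaryRisk, div_mul_eq_mul_div, sum_div, neg_div]

lemma sum_one_sub_eq_of_sum_eq (hsum : ∑ k, p k = ∑ k, q k) :
    ∑ k, (1 - p k) = ∑ k, (1 - q k) := by
  simp only [sum_sub_distrib, hsum]

lemma complementaryRisk_self_le (hK : 2 ≤ K) (hqlt : ∀ k, q k < 1) (hplt : ∀ k, p k < 1)
    (hsum : ∑ k, p k = ∑ k, q k) :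
    complementaryRisk q q ≤ complementaryRisk q p := by
  rw [complementaryRisk_eq_neg_sum_div, complementaryRisk_eq_neg_sum_div]
  refine div_le_div_of_nonneg_right (neg_le_neg ?_) (sub_pos.mpr (Nat.one_lt_cast.mpr hK)).le
  exact sum_mul_log_le_sum_mul_log (fun k => sub_pos.mpr (hqlt k))
    (fun k => sub_pos.mpr (hplt k)) (sum_one_sub_eq_of_sum_eq hsum)

lemma complementaryRisk_self_lt (hK : 2 ≤ K) (hqlt : ∀ k, q k < 1) (hplt : ∀ k, p k < 1)
    (hsum : ∑ k, p k = ∑ k, q k) (hpq : p ≠ q) :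
    complementaryRisk q q < complementaryRisk q p := by
  rw [complementaryRisk_eq_neg_sum_div, complementaryRisk_eq_neg_sum_div]
  refine div_lt_div_of_pos_right (neg_lt_neg ?_) (sub_pos.mpr (Nat.one_lt_cast.mpr hK))
  refine sum_mul_log_lt_sum_mul_log (fun k => sub_pos.mpr (hqlt k))
    (fun k => sub_pos.mpr (hplt k)) (sum_one_sub_eq_of_sum_eq hsum) fun h => hpq ?_
  funext k
  simpa using congrFun h k

end ComplementaryRisk

section TotalComplementaryRisk

variable {K : ℕ} {X : Type*} [Fintype X] {μ : X → ℝ} {q p : X → Fin K → ℝ}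

lemma totalComplementaryRisk_self_le (hK : 2 ≤ K) (hμ : ∀ x, 0 ≤ μ x)
    (hqlt : ∀ x k, q x k < 1) (hplt : ∀ x k, p x k < 1)
    (hsum : ∀ x, ∑ k, p x k = ∑ k, q x k) :
    totalComplementaryRisk μ q q ≤ totalComplementaryRisk μ q p :=
  sum_le_sum fun x _ => mul_le_mul_of_nonneg_left
    (complementaryRisk_self_le hK (hqlt x) (hplt x) (hsum x)) (hμ x)

lemma totalComplementaryRisk_self_lt (hK : 2 ≤ K) (hμ : ∀ x, 0 < μ x)
    (hqlt : ∀ x k, q x k < 1) (hplt : ∀ x k, p x k < 1)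
    (hsum : ∀ x, ∑ k, p x k = ∑ k, q x k) (hpq : p ≠ q) :
    totalComplementaryRisk μ q q < totalComplementaryRisk μ q p := by
  obtain ⟨x, hx⟩ := Function.ne_iff.mp hpq
  exact sum_lt_sum (fun y _ => mul_le_mul_of_nonneg_left
      (complementaryRisk_self_le hK (hqlt y) (hplt y) (hsum y)) (hμ y).le)
    ⟨x, mem_univ x, mul_lt_mul_of_pos_left
      (complementaryRisk_self_lt hK (hqlt x) (hplt x) (hsum x) hx) (hμ x)⟩

lemma totalComplementaryRisk_eq_self_iff (hK : 2 ≤ K) (hμ : ∀ x, 0 < μ x)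
    (hqlt : ∀ x k, q x k < 1) (hplt : ∀ x k, p x k < 1)
    (hsum : ∀ x, ∑ k, p x k = ∑ k, q x k) :
    totalComplementaryRisk μ q p = totalComplementaryRisk μ q q ↔ p = q :=
  ⟨fun h => by_contra fun hpq =>
    (totalComplementaryRisk_self_lt hK hμ hqlt hplt hsum hpq).ne' h, fun h => h ▸ rfl⟩

end TotalComplementaryRisk

theorem discrete_complementary_risk_theorem_general {K : ℕ} (hK : 2 ≤ K)
    {X : Type*} [Fintype X]
    (μ : X → ℝ) (hμpos : ∀ x, 0 < μ x)
    (q : X → Fin K → ℝ)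
    (hq0 : ∀ x k, 0 ≤ q x k) (hq1 : ∀ x, ∑ k, q x k = 1)
    (hqlt : ∀ x k, q x k < 1) :
    (∀ p : X → Fin K → ℝ,
      (∀ x k, 0 ≤ p x k) → (∀ x, ∑ k, p x k = 1) → (∀ x k, p x k < 1) →
      (∑ x, μ x * (-∑ k, ((1 - q x k) / ((K : ℝ) - 1)) * Real.log (1 - p x k)) ≥
        ∑ x, μ x * (-∑ k, ((1 - q x k) / ((K : ℝ) - 1)) * Real.log (1 - q x k))) ∧
      ((∑ x, μ x * (-∑ k, ((1 - q x k) / ((K : ℝ) - 1)) * Real.log (1 - p x k)) =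
        ∑ x, μ x * (-∑ k, ((1 - q x k) / ((K : ℝ) - 1)) * Real.log (1 - q x k))) ↔
        ∀ x, p x = q x)) ∧
    (∀ p : X → Fin K → ℝ,
      (∀ x k, 0 ≤ p x k) → (∀ x, ∑ k, p x k = 1) → (∀ x k, p x k < 1) →
      (∀ p' : X → Fin K → ℝ,
        (∀ x k, 0 ≤ p' x k) → (∀ x, ∑ k, p' x k = 1) → (∀ x k, p' x k < 1) →
        ∑ x, μ x * (-∑ k, ((1 - q x k) / ((K : ℝ) - 1)) * Real.log (1 - p x k)) ≤
          ∑ x, μ x * (-∑ k, ((1 - q x k) / ((K : ℝ) - 1)) * Real.log (1 - p' x k))) →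
      ∀ x : X, {k : Fin K | ∀ j, p x j ≤ p x k} = {k : Fin K | ∀ j, q x j ≤ q x k}) := by
  have hsum {p : X → Fin K → ℝ} (hp1 : ∀ x, ∑ k, p x k = 1) x :
      ∑ k, p x k = ∑ k, q x k := (hp1 x).trans (hq1 x).symm
  have hmin {p : X → Fin K → ℝ} (hp1 : ∀ x, ∑ k, p x k = 1) (hplt : ∀ x k, p x k < 1) :
      totalComplementaryRisk μ q q ≤ totalComplementaryRisk μ q p :=
    totalComplementaryRisk_self_le hK (fun x => (hμpos x).le) hqlt hplt (hsum hp1)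
  have heq {p : X → Fin K → ℝ} (hp1 : ∀ x, ∑ k, p x k = 1) (hplt : ∀ x k, p x k < 1) :
      totalComplementaryRisk μ q p = totalComplementaryRisk μ q q ↔ p = q :=
    totalComplementaryRisk_eq_self_iff hK hμpos hqlt hplt (hsum hp1)
  refine ⟨fun p _ hp1 hplt => ⟨hmin hp1 hplt, (heq hp1 hplt).trans funext_iff⟩, ?_⟩
  intro p _ hp1 hplt hpmin x
  rw [(heq hp1 hplt).mp ((hpmin q hq0 hq1 hqlt).antisymm (hmin hp1 hplt))]

/-- discrete form of Theorem 1: over a nonempty finite instance space `X`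
with instance weights `μ` and true posteriors `q(x)` (all coordinates `< 1`), the total
complementary risk `R̄(p) = ∑_x μ(x) · (-∑_k q̄_k(x) log(1 - p_k(x)))` over admissible
predictors `p` is minimized exactly at `p = q`; and any minimizer induces at every
instance the same argmax decision as the Bayes classifier `x ↦ argmax_k q_k(x)`. -/
theorem discrete_complementary_risk_theorem {K : ℕ} (hK : 2 ≤ K)
    {X : Type*} [Fintype X] [Nonempty X]
    (μ : X → ℝ) (hμpos : ∀ x, 0 < μ x) (hμ1 : ∑ x, μ x = 1)
    (q : X → Fin K → ℝ)
    (hq0 : ∀ x k, 0 ≤ q x k) (hq1 : ∀ x, ∑ k, q x k = 1)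
    (hqlt : ∀ x k, q x k < 1) :
    (∀ p : X → Fin K → ℝ,
      (∀ x k, 0 ≤ p x k) → (∀ x, ∑ k, p x k = 1) → (∀ x k, p x k < 1) →
      (∑ x, μ x * (-∑ k, ((1 - q x k) / ((K : ℝ) - 1)) * Real.log (1 - p x k)) ≥
        ∑ x, μ x * (-∑ k, ((1 - q x k) / ((K : ℝ) - 1)) * Real.log (1 - q x k))) ∧
      ((∑ x, μ x * (-∑ k, ((1 - q x k) / ((K : ℝ) - 1)) * Real.log (1 - p x k)) =
        ∑ x, μ x * (-∑ k, ((1 - q x k) / ((K : ℝ) - 1)) * Real.log (1 - q x k))) ↔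
        ∀ x, p x = q x)) ∧
    (∀ p : X → Fin K → ℝ,
      (∀ x k, 0 ≤ p x k) → (∀ x, ∑ k, p x k = 1) → (∀ x k, p x k < 1) →
      (∀ p' : X → Fin K → ℝ,
        (∀ x k, 0 ≤ p' x k) → (∀ x, ∑ k, p' x k = 1) → (∀ x k, p' x k < 1) →
        ∑ x, μ x * (-∑ k, ((1 - q x k) / ((K : ℝ) - 1)) * Real.log (1 - p x k)) ≤
          ∑ x, μ x * (-∑ k, ((1 - q x k) / ((K : ℝ) - 1)) * Real.log (1 - p' x k))) →
      ∀ x : X, {k : Fin K | ∀ j, p x j ≤ p x k} = {k : Fin K | ∀ j, q x j ≤ q x k}) :=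
  discrete_complementary_risk_theorem_general hK μ hμpos q hq0 hq1 hqlt
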